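/- arXiv:1410.3396 — 2 statements merged into one kernel-verified Lean document; each statement's English description precedes it below -/
import Mathlib

section
/- (Easy Perturbation Lemma) Let (α, β, η) : (C, ∂) → (C', ∂') be a reduction of chain complexes and let δ' be a perturbation of ∂', i.e., ∂' + δ' is again a differential on C'. Then (α, β, η) is a reduction from (C, ∂ + β δ' α) to (C', ∂' + δ'), where in particular ∂ + β δ' α is a differential on C. -/
/-- A non-negatively graded chain complex of abelian groups. -/
structure ChCx where
  X : ℕ → Type
  ab : ∀ n, AddCommGroup (X n)
  d : ∀ n, X (n + 1) →+ X n
  dd : ∀ n (c : X (n + 2)), d n (d (n + 1) c) = 0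

attribute [instance] ChCx.ab

/-- A chain map between chain complexes. -/
structure ChMap (C C' : ChCx) where
  f : ∀ n, C.X n →+ C'.X n
  comm : ∀ n (c : C.X (n + 1)), f n (C.d n c) = C'.d n (f (n + 1) c)

/-- A reduction `(α, β, η) : C ⇒ C'`. -/
structure Reduction (C C' : ChCx) where
  α : ChMap C C'
  β : ChMap C' C
  η : ∀ n, C.X n →+ C.X (n + 1)
  ηβ : ∀ n (c : C'.X n), η n (β.f n c) = 0
  αη : ∀ n (c : C.X n), α.f (n + 1) (η n c) = 0
  αβ : ∀ n (c : C'.X n), α.f n (β.f n c) = c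
  ηη : ∀ n (c : C.X n), η (n + 1) (η n c) = 0
  hmt0 : ∀ c : C.X 0, C.d 0 (η 0 c) = c - β.f 0 (α.f 0 c)
  hmt : ∀ n (c : C.X (n + 1)),
    C.d (n + 1) (η (n + 1) c) + η n (C.d n c) = c - β.f (n + 1) (α.f (n + 1) c)

/-!
Transferring `δ'` along the reduction gives `βδ'α`. The perturbed differential squares to zero
because its square is `β(∂'δ' + δ'∂' + δ'δ')α`, using `αβ = id` and that `α, β` are chain maps,
and `∂'δ' + δ'∂' + δ'δ' = (∂' + δ')² - ∂'² = 0`. The homotopy identity survives unchanged since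
the new terms `βδ'αη` and `ηβδ'α` vanish by the side conditions `αη = 0` and `ηβ = 0`.
-/

namespace ChCx

variable (C : ChCx) (δ : ∀ n, C.X (n + 1) →+ C.X n)

def IsPerturbation : Prop :=
  ∀ n (c : C.X (n + 2)), (C.d n + δ n) ((C.d (n + 1) + δ (n + 1)) c) = 0

abbrev perturb (h : C.IsPerturbation δ) : ChCx where
  X := C.X
  ab := C.ab
  d n := C.d n + δ n
  dd := h

variable {C δ}

theorem IsPerturbation.cross_terms_eq_zero (h : C.IsPerturbation δ) (n : ℕ) (c : C.X (n + 2)) :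
    δ n (C.d (n + 1) c) + (C.d n (δ (n + 1) c) + δ n (δ (n + 1) c)) = 0 := by
  simpa only [AddMonoidHom.add_apply, map_add, C.dd n c, zero_add] using h n c

end ChCx

namespace Reduction

variable {C C' : ChCx} (R : Reduction C C') {δ' : ∀ n, C'.X (n + 1) →+ C'.X n}

variable (δ') in
def transfer (n : ℕ) : C.X (n + 1) →+ C.X n :=
  (R.β.f n).comp ((δ' n).comp (R.α.f (n + 1)))

theorem transfer_apply (n : ℕ) (c : C.X (n + 1)) :
    R.transfer δ' n c = R.β.f n (δ' n (R.α.f (n + 1) c)) :=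
  rfl

theorem transfer_isPerturbation (hδ' : C'.IsPerturbation δ') :
    C.IsPerturbation (R.transfer δ') := by
  intro n c
  simp only [AddMonoidHom.add_apply, transfer_apply, map_add, C.dd n c, zero_add, R.α.comm,
    R.αβ, ← R.β.comm]
  rw [← map_add, ← map_add, hδ'.cross_terms_eq_zero, map_zero]

def perturb (hδ' : C'.IsPerturbation δ') :
    Reduction (C.perturb (R.transfer δ') (R.transfer_isPerturbation hδ'))
      (C'.perturb δ' hδ') where
  α := ⟨R.α.f, fun n c => by
    simp only [AddMonoidHom.add_apply, transfer_apply, map_add, R.α.comm, R.αβ]⟩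
  β := ⟨R.β.f, fun n c => by
    simp only [AddMonoidHom.add_apply, transfer_apply, map_add, R.β.comm, R.αβ]⟩
  η := R.η
  ηβ := R.ηβ
  αη := R.αη
  αβ := R.αβ
  ηη := R.ηη
  hmt0 c := by
    simpa only [AddMonoidHom.add_apply, transfer_apply, R.αη, map_zero, add_zero]
      using R.hmt0 c
  hmt n c := by
    simpa only [AddMonoidHom.add_apply, transfer_apply, map_add, R.αη, R.ηβ,
      map_zero, add_zero] using R.hmt n c

end Reduction

/-- Easy Perturbation Lemma: if `δ'` is a perturbation of `∂'`, then
`∂ + βδ'α` is a differential on `C` and `(α, β, η)` is a reduction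
`(C, ∂ + βδ'α) ⇒ (C', ∂' + δ')`. -/
theorem easy_perturbation_lemma (C C' : ChCx) (R : Reduction C C')
    (δ' : ∀ n, C'.X (n + 1) →+ C'.X n)
    (hδ' : ∀ n (c : C'.X (n + 2)),
      (C'.d n + δ' n) ((C'.d (n + 1) + δ' (n + 1)) c) = 0) :
    ∃ hd : ∀ n (c : C.X (n + 2)),
        (C.d n + (R.β.f n).comp ((δ' n).comp (R.α.f (n + 1))))
          ((C.d (n + 1) + (R.β.f (n + 1)).comp ((δ' (n + 1)).comp (R.α.f (n + 2)))) c) = 0,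
      ∃ R' : Reduction
          { X := C.X, ab := C.ab,
            d := fun n => C.d n + (R.β.f n).comp ((δ' n).comp (R.α.f (n + 1))),
            dd := hd }
          { X := C'.X, ab := C'.ab, d := fun n => C'.d n + δ' n, dd := hδ' },
        R'.α.f = R.α.f ∧ R'.β.f = R.β.f ∧ R'.η = R.η :=
  ⟨R.transfer_isPerturbation hδ', R.perturb hδ', rfl, rfl, rfl⟩
end

section
/- Tensor products of reductions are reductions: if (α₁, β₁, η₁) : C₁ → C₁' and (α₂, β₂, η₂) : C₂ → C₂' are reductions of non-negatively graded chain complexes of abelian groups, then setting α = α₁ ⊗ α₂, β = β₁ ⊗ β₂, and η = η₁ ⊗ (β₂α₂) + id ⊗ η₂ (with appropriate Koszul signs) gives a reduction C₁ ⊗ C₂ → C₁' ⊗ C₂'. -/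
/-- Transport along an equality of degrees. -/
def ChCx.cast (C : ChCx) {a b : ℕ} (h : a = b) : C.X a →+ C.X b :=
  h ▸ AddMonoidHom.id (C.X a)

/-- `T` is (a realization of) the tensor product `C₁ ⊗ C₂` of chain complexes, with
structure maps `ι p q : (C₁)_p ⊗ (C₂)_q →+ T_{p+q}`: in each degree `n`, `T_n` is the
direct sum `⊕_{p+q=n} (C₁)_p ⊗ (C₂)_q`, and the differential is given on pure tensors
by `∂(x ⊗ y) = ∂x ⊗ y + (−1)^{|x|} x ⊗ ∂y` (Koszul sign). -/
def IsTensorCx (C₁ C₂ T : ChCx)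
    (ι : ∀ p q, TensorProduct ℤ (C₁.X p) (C₂.X q) →+ T.X (p + q)) : Prop :=
  (∀ n, Function.Bijective
    ⇑(DirectSum.toAddMonoid
      (fun p : Fin (n + 1) =>
        (T.cast (Nat.add_sub_cancel' (Nat.lt_succ_iff.mp p.isLt))).comp
          (ι ↑p (n - ↑p))))) ∧
  (∀ p q (x : C₁.X (p + 1)) (y : C₂.X (q + 1)),
    T.d (p + q + 1) (T.cast (by omega) (ι (p + 1) (q + 1) (x ⊗ₜ[ℤ] y)))
      = T.cast (by omega) (ι p (q + 1) ((C₁.d p x) ⊗ₜ[ℤ] y))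
        + ((-1 : ℤ) ^ (p + 1)) •
            T.cast (by omega) (ι (p + 1) q (x ⊗ₜ[ℤ] (C₂.d q y)))) ∧
  (∀ p (x : C₁.X (p + 1)) (y : C₂.X 0),
    T.d p (T.cast (by omega) (ι (p + 1) 0 (x ⊗ₜ[ℤ] y)))
      = T.cast (by omega) (ι p 0 ((C₁.d p x) ⊗ₜ[ℤ] y))) ∧
  (∀ q (x : C₁.X 0) (y : C₂.X (q + 1)),
    T.d q (T.cast (by omega) (ι 0 (q + 1) (x ⊗ₜ[ℤ] y)))
      = T.cast (by omega) (ι 0 q (x ⊗ₜ[ℤ] (C₂.d q y))))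

/-! Every element of `T_n` is a sum of images of pure tensors `x ⊗ y`, so additive maps out of
`T_n` agree once they agree on those, and maps defined summand by summand on
`⊕_{p+q=n} (C₁)_p ⊗ (C₂)_q` are computed on them by their defining formula. Each reduction
identity for `T` thus reduces to pure tensors, where it follows from the identities of `R₁` and
`R₂`. For the homotopy identity, with `π = βα`, the Koszul signs make the cross terms of
`∂η + η∂` cancel (using `π₂∂ = ∂π₂`), leaving
`(∂η₁ + η₁∂)x ⊗ π₂y + x ⊗ (∂η₂ + η₂∂)y = (x - π₁x) ⊗ π₂y + x ⊗ (y - π₂y) = x ⊗ y - π₁x ⊗ π₂y`.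
Because the complexes stop in degree 0, where there is no differential, this computation
splits according to whether `|x|` and `|y|` vanish. -/

open TensorProduct

namespace ChCx

@[simp] theorem cast_rfl (C : ChCx) {a : ℕ} (x : C.X a) : C.cast rfl x = x := rfl

@[simp] theorem cast_cast (C : ChCx) {a b c : ℕ} (h : a = b) (h' : b = c) (x : C.X a) :
    C.cast h' (C.cast h x) = C.cast (h.trans h') x := by
  subst h h'
  rfl

end ChCx

theorem apply_map_id_cast {A : Type*} [AddCommGroup A] {C U : ChCx} {e : ℕ → ℕ}
    (φ : ∀ q, A ⊗[ℤ] C.X q →+ U.X (e q)) {q q' : ℕ} (h : q = q') (t : A ⊗[ℤ] C.X q) :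
    φ q' (map LinearMap.id (C.cast h).toIntLinearMap t) = U.cast (congrArg e h) (φ q t) := by
  subst h
  rw [show (C.cast rfl).toIntLinearMap = LinearMap.id from rfl, map_id, LinearMap.id_apply]
  rfl

theorem neg_one_pow_smul_neg_one_pow_smul {A : Type*} [AddCommGroup A] (p : ℕ) (v : A) :
    (-1 : ℤ) ^ p • (-1 : ℤ) ^ p • v = v := by
  rw [smul_smul, ← pow_add, ← two_mul, pow_mul, neg_one_sq, one_pow, one_smul]

namespace IsTensorCx

variable {C₁ C₂ T : ChCx} {ι : ∀ p q, C₁.X p ⊗[ℤ] C₂.X q →+ T.X (p + q)}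

noncomputable def equiv (hT : IsTensorCx C₁ C₂ T ι) (n : ℕ) :
    (DirectSum (Fin (n + 1)) fun p => C₁.X p ⊗[ℤ] C₂.X (n - p)) ≃+ T.X n :=
  AddEquiv.ofBijective _ (hT.1 n)

theorem equiv_of (hT : IsTensorCx C₁ C₂ T ι) (n : ℕ) (p : Fin (n + 1))
    (t : C₁.X p ⊗[ℤ] C₂.X (n - p)) :
    hT.equiv n (DirectSum.of _ p t) = T.cast (by omega) (ι p (n - p) t) := by
  rw [equiv, AddEquiv.ofBijective_apply, DirectSum.toAddMonoid_of, AddMonoidHom.comp_apply]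

theorem equiv_symm_cast_ι (hT : IsTensorCx C₁ C₂ T ι) {p q n : ℕ} (h : p + q = n)
    (t : C₁.X p ⊗[ℤ] C₂.X q) :
    (hT.equiv n).symm (T.cast h (ι p q t)) =
      DirectSum.of _ ⟨p, by omega⟩
        (map LinearMap.id (C₂.cast (show q = n - p by omega)).toIntLinearMap t) := by
  rw [AddEquiv.symm_apply_eq, equiv_of, apply_map_id_cast (e := (p + ·)) (ι p), ChCx.cast_cast]

theorem addHom_ext (hT : IsTensorCx C₁ C₂ T ι) {n : ℕ} {A : Type*} [AddCommGroup A]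
    {f g : T.X n →+ A}
    (h : ∀ p q (hpq : p + q = n) (x : C₁.X p) (y : C₂.X q),
      f (T.cast hpq (ι p q (x ⊗ₜ y))) = g (T.cast hpq (ι p q (x ⊗ₜ y)))) :
    f = g := by
  suffices f.comp (hT.equiv n).toAddMonoidHom = g.comp (hT.equiv n).toAddMonoidHom by
    ext c
    simpa using DFunLike.congr_fun this ((hT.equiv n).symm c)
  refine DirectSum.addHom_ext fun p t => ?_
  induction t using TensorProduct.induction_on with
  | zero => simp
  | tmul x y =>
    simpa only [AddMonoidHom.comp_apply, AddEquiv.coe_toAddMonoidHom, equiv_of] using h _ _ _ x y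
  | add a b ha hb => simp only [map_add] at ha hb ⊢; rw [ha, hb]

noncomputable def lift (hT : IsTensorCx C₁ C₂ T ι) {U : ChCx} {k : ℕ}
    (φ : ∀ p q, C₁.X p ⊗[ℤ] C₂.X q →+ U.X (p + q + k)) (n : ℕ) : T.X n →+ U.X (n + k) :=
  (DirectSum.toAddMonoid fun p : Fin (n + 1) =>
    (U.cast (by omega)).comp (φ p (n - p))).comp (hT.equiv n).symm.toAddMonoidHom

theorem lift_cast_ι (hT : IsTensorCx C₁ C₂ T ι) {U : ChCx} {k : ℕ}
    (φ : ∀ p q, C₁.X p ⊗[ℤ] C₂.X q →+ U.X (p + q + k)) {p q n : ℕ} (h : p + q = n)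
    (t : C₁.X p ⊗[ℤ] C₂.X q) :
    hT.lift φ n (T.cast h (ι p q t)) = U.cast (by omega) (φ p q t) := by
  rw [lift, AddMonoidHom.comp_apply, AddEquiv.coe_toAddMonoidHom, equiv_symm_cast_ι hT h,
    DirectSum.toAddMonoid_of, AddMonoidHom.comp_apply, apply_map_id_cast (e := (p + · + k)) (φ p),
    ChCx.cast_cast]

theorem d_cast_ι_succ_succ (hT : IsTensorCx C₁ C₂ T ι) {p q n : ℕ} (h : p + 1 + (q + 1) = n + 1)
    (h₁ : p + (q + 1) = n) (h₂ : p + 1 + q = n) (x : C₁.X (p + 1)) (y : C₂.X (q + 1)) :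
    T.d n (T.cast h (ι (p + 1) (q + 1) (x ⊗ₜ y))) =
      T.cast h₁ (ι p (q + 1) (C₁.d p x ⊗ₜ y)) +
        (-1 : ℤ) ^ (p + 1) • T.cast h₂ (ι (p + 1) q (x ⊗ₜ C₂.d q y)) := by
  obtain rfl : n = p + q + 1 := by omega
  exact hT.2.1 p q x y

theorem d_cast_ι_succ_zero (hT : IsTensorCx C₁ C₂ T ι) {p n : ℕ} (h : p + 1 + 0 = n + 1)
    (h₁ : p + 0 = n) (x : C₁.X (p + 1)) (y : C₂.X 0) :
    T.d n (T.cast h (ι (p + 1) 0 (x ⊗ₜ y))) = T.cast h₁ (ι p 0 (C₁.d p x ⊗ₜ y)) := by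
  obtain rfl : n = p := by omega
  exact hT.2.2.1 _ x y

theorem d_cast_ι_zero_succ (hT : IsTensorCx C₁ C₂ T ι) {q n : ℕ} (h : 0 + (q + 1) = n + 1)
    (h₁ : 0 + q = n) (x : C₁.X 0) (y : C₂.X (q + 1)) :
    T.d n (T.cast h (ι 0 (q + 1) (x ⊗ₜ y))) = T.cast h₁ (ι 0 q (x ⊗ₜ C₂.d q y)) := by
  obtain rfl : n = q := by omega
  exact hT.2.2.2 _ x y

end IsTensorCx

section TensorMap

variable {C₁ C₂ T D₁ D₂ U : ChCx} {ι : ∀ p q, C₁.X p ⊗[ℤ] C₂.X q →+ T.X (p + q)}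
  {κ : ∀ p q, D₁.X p ⊗[ℤ] D₂.X q →+ U.X (p + q)}

noncomputable def IsTensorCx.map (hT : IsTensorCx C₁ C₂ T ι)
    (κ : ∀ p q, D₁.X p ⊗[ℤ] D₂.X q →+ U.X (p + q))
    (f₁ : ∀ n, C₁.X n →+ D₁.X n) (f₂ : ∀ n, C₂.X n →+ D₂.X n) (n : ℕ) : T.X n →+ U.X n :=
  hT.lift (k := 0) (fun p q =>
    (κ p q).comp (TensorProduct.map (f₁ p).toIntLinearMap (f₂ q).toIntLinearMap).toAddMonoidHom) n

theorem IsTensorCx.map_cast_ι (hT : IsTensorCx C₁ C₂ T ι)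
    (κ : ∀ p q, D₁.X p ⊗[ℤ] D₂.X q →+ U.X (p + q))
    (f₁ : ∀ n, C₁.X n →+ D₁.X n) (f₂ : ∀ n, C₂.X n →+ D₂.X n) {p q n : ℕ} (h : p + q = n)
    (x : C₁.X p) (y : C₂.X q) :
    hT.map κ f₁ f₂ n (T.cast h (ι p q (x ⊗ₜ y))) = U.cast h (κ p q (f₁ p x ⊗ₜ f₂ q y)) :=
  hT.lift_cast_ι _ h _

theorem IsTensorCx.map_comp_d (hT : IsTensorCx C₁ C₂ T ι) (hU : IsTensorCx D₁ D₂ U κ)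
    (f₁ : ChMap C₁ D₁) (f₂ : ChMap C₂ D₂) (n : ℕ) :
    (hT.map κ f₁.f f₂.f n).comp (T.d n) = (U.d n).comp (hT.map κ f₁.f f₂.f (n + 1)) := by
  refine hT.addHom_ext fun p q h x y => ?_
  simp only [AddMonoidHom.comp_apply]
  match p, q, h, x, y with
  | 0, 0, h, _, _ => omega
  | 0, q + 1, h, x, y =>
    rw [hT.d_cast_ι_zero_succ h (by omega), hT.map_cast_ι, hT.map_cast_ι,
      hU.d_cast_ι_zero_succ h (by omega), f₂.comm]
  | p + 1, 0, h, x, y =>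
    rw [hT.d_cast_ι_succ_zero h (by omega), hT.map_cast_ι, hT.map_cast_ι,
      hU.d_cast_ι_succ_zero h (by omega), f₁.comm]
  | p + 1, q + 1, h, x, y =>
    rw [hT.d_cast_ι_succ_succ h (by omega) (by omega), map_add, map_zsmul, hT.map_cast_ι,
      hT.map_cast_ι, hT.map_cast_ι, hU.d_cast_ι_succ_succ h (by omega) (by omega), f₁.comm,
      f₂.comm]

noncomputable def ChMap.tensor (hT : IsTensorCx C₁ C₂ T ι) (hU : IsTensorCx D₁ D₂ U κ)
    (f₁ : ChMap C₁ D₁) (f₂ : ChMap C₂ D₂) : ChMap T U where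
  f := hT.map κ f₁.f f₂.f
  comm n := DFunLike.congr_fun (hT.map_comp_d hU f₁ f₂ n)

end TensorMap

namespace Reduction

variable {C₁ C₁' C₂ C₂' T T' : ChCx} {ι : ∀ p q, C₁.X p ⊗[ℤ] C₂.X q →+ T.X (p + q)}
  {ι' : ∀ p q, C₁'.X p ⊗[ℤ] C₂'.X q →+ T'.X (p + q)}

theorem βα_d {C C' : ChCx} (R : Reduction C C') (n : ℕ) (c : C.X (n + 1)) :
    R.β.f n (R.α.f n (C.d n c)) = C.d n (R.β.f (n + 1) (R.α.f (n + 1) c)) := by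
  rw [R.α.comm, R.β.comm]

noncomputable def tensorHomotopy (hT : IsTensorCx C₁ C₂ T ι) (R₁ : Reduction C₁ C₁')
    (R₂ : Reduction C₂ C₂') (n : ℕ) : T.X n →+ T.X (n + 1) :=
  hT.lift (k := 1) (fun p q =>
    (T.cast (by omega)).comp ((ι (p + 1) q).comp
      (map (R₁.η p).toIntLinearMap ((R₂.β.f q).comp (R₂.α.f q)).toIntLinearMap).toAddMonoidHom) +
    (-1 : ℤ) ^ p • (T.cast (by omega)).comp ((ι p (q + 1)).comp
      (map LinearMap.id (R₂.η q).toIntLinearMap).toAddMonoidHom)) n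

theorem tensorHomotopy_cast_ι (hT : IsTensorCx C₁ C₂ T ι) (R₁ : Reduction C₁ C₁')
    (R₂ : Reduction C₂ C₂') {p q n : ℕ} (h : p + q = n) (h₁ : p + 1 + q = n + 1)
    (h₂ : p + (q + 1) = n + 1) (x : C₁.X p) (y : C₂.X q) :
    tensorHomotopy hT R₁ R₂ n (T.cast h (ι p q (x ⊗ₜ y))) =
      T.cast h₁ (ι (p + 1) q (R₁.η p x ⊗ₜ R₂.β.f q (R₂.α.f q y))) +
        (-1 : ℤ) ^ p • T.cast h₂ (ι p (q + 1) (x ⊗ₜ R₂.η q y)) := by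
  rw [tensorHomotopy, hT.lift_cast_ι _ h, AddMonoidHom.add_apply, AddMonoidHom.smul_apply,
    map_add, map_zsmul]
  simp only [AddMonoidHom.comp_apply, LinearMap.toAddMonoidHom_coe, map_tmul,
    AddMonoidHom.coe_toIntLinearMap, LinearMap.id_apply, ChCx.cast_cast]

section Identities

variable (hT : IsTensorCx C₁ C₂ T ι) (R₁ : Reduction C₁ C₁') (R₂ : Reduction C₂ C₂')

theorem tensorHomotopy_hmt_cast_ι_zero_zero (h : 0 + 0 = 0) (x : C₁.X 0) (y : C₂.X 0) :
    T.d 0 (tensorHomotopy hT R₁ R₂ 0 (T.cast h (ι 0 0 (x ⊗ₜ y)))) =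
      T.cast h (ι 0 0 (x ⊗ₜ y)) -
        T.cast h (ι 0 0 (R₁.β.f 0 (R₁.α.f 0 x) ⊗ₜ R₂.β.f 0 (R₂.α.f 0 y))) := by
  rw [tensorHomotopy_cast_ι hT R₁ R₂ h (by omega) (by omega), map_add, map_zsmul,
    hT.d_cast_ι_succ_zero (p := 0) _ rfl, hT.d_cast_ι_zero_succ (q := 0) _ rfl, R₁.hmt0, R₂.hmt0]
  simp only [ChCx.cast_rfl, pow_zero, one_smul, sub_tmul, tmul_sub, map_sub]
  abel

theorem tensorHomotopy_hmt_cast_ι_zero_succ {q n : ℕ} (h : 0 + (q + 1) = n + 1) (x : C₁.X 0)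
    (y : C₂.X (q + 1)) :
    T.d (n + 1) (tensorHomotopy hT R₁ R₂ (n + 1) (T.cast h (ι 0 (q + 1) (x ⊗ₜ y)))) +
        tensorHomotopy hT R₁ R₂ n (T.d n (T.cast h (ι 0 (q + 1) (x ⊗ₜ y)))) =
      T.cast h (ι 0 (q + 1) (x ⊗ₜ y)) -
        T.cast h (ι 0 (q + 1) (R₁.β.f 0 (R₁.α.f 0 x) ⊗ₜ R₂.β.f (q + 1) (R₂.α.f (q + 1) y))) := by
  rw [tensorHomotopy_cast_ι hT R₁ R₂ h (by omega) (by omega), map_add, map_zsmul,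
    hT.d_cast_ι_succ_succ _ h (by omega), hT.d_cast_ι_zero_succ _ h,
    hT.d_cast_ι_zero_succ h (by omega), tensorHomotopy_cast_ι hT R₁ R₂ _ (by omega) h, R₂.βα_d,
    R₁.hmt0, eq_sub_of_add_eq (R₂.hmt q y)]
  simp only [sub_tmul, tmul_sub, map_sub]
  module

theorem tensorHomotopy_hmt_cast_ι_succ_zero {p n : ℕ} (h : p + 1 + 0 = n + 1) (x : C₁.X (p + 1))
    (y : C₂.X 0) :
    T.d (n + 1) (tensorHomotopy hT R₁ R₂ (n + 1) (T.cast h (ι (p + 1) 0 (x ⊗ₜ y)))) +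
        tensorHomotopy hT R₁ R₂ n (T.d n (T.cast h (ι (p + 1) 0 (x ⊗ₜ y)))) =
      T.cast h (ι (p + 1) 0 (x ⊗ₜ y)) -
        T.cast h (ι (p + 1) 0 (R₁.β.f (p + 1) (R₁.α.f (p + 1) x) ⊗ₜ R₂.β.f 0 (R₂.α.f 0 y))) := by
  rw [tensorHomotopy_cast_ι hT R₁ R₂ h (by omega) (by omega), map_add, map_zsmul,
    hT.d_cast_ι_succ_zero _ h, hT.d_cast_ι_succ_succ _ (by omega) h,
    hT.d_cast_ι_succ_zero h (by omega), tensorHomotopy_cast_ι hT R₁ R₂ _ h (by omega),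
    eq_sub_of_add_eq (R₁.hmt p x), R₂.hmt0]
  simp only [sub_tmul, tmul_sub, map_sub, smul_add, smul_sub, neg_one_pow_smul_neg_one_pow_smul]
  simp only [pow_succ, mul_neg_one, neg_smul]
  abel

theorem tensorHomotopy_hmt_cast_ι_succ_succ {p q n : ℕ} (h : p + 1 + (q + 1) = n + 1)
    (x : C₁.X (p + 1)) (y : C₂.X (q + 1)) :
    T.d (n + 1) (tensorHomotopy hT R₁ R₂ (n + 1) (T.cast h (ι (p + 1) (q + 1) (x ⊗ₜ y)))) +
        tensorHomotopy hT R₁ R₂ n (T.d n (T.cast h (ι (p + 1) (q + 1) (x ⊗ₜ y)))) =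
      T.cast h (ι (p + 1) (q + 1) (x ⊗ₜ y)) -
        T.cast h (ι (p + 1) (q + 1)
          (R₁.β.f (p + 1) (R₁.α.f (p + 1) x) ⊗ₜ R₂.β.f (q + 1) (R₂.α.f (q + 1) y))) := by
  rw [tensorHomotopy_cast_ι hT R₁ R₂ h (by omega) (by omega), map_add, map_zsmul,
    hT.d_cast_ι_succ_succ _ h (by omega), hT.d_cast_ι_succ_succ _ (by omega) h,
    hT.d_cast_ι_succ_succ h (by omega) (by omega), map_add, map_zsmul,
    tensorHomotopy_cast_ι hT R₁ R₂ _ h (by omega), tensorHomotopy_cast_ι hT R₁ R₂ _ (by omega) h,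
    R₂.βα_d, eq_sub_of_add_eq (R₁.hmt p x), eq_sub_of_add_eq (R₂.hmt q y)]
  simp only [sub_tmul, tmul_sub, map_sub, smul_add, smul_sub, neg_one_pow_smul_neg_one_pow_smul]
  simp only [pow_succ, mul_neg_one, neg_smul]
  abel

theorem tensorHomotopy_comp_map_β (hT' : IsTensorCx C₁' C₂' T' ι') (n : ℕ) :
    (tensorHomotopy hT R₁ R₂ n).comp (hT'.map ι R₁.β.f R₂.β.f n) = 0 :=
  hT'.addHom_ext fun p q h x y => by
    rw [AddMonoidHom.comp_apply, hT'.map_cast_ι, tensorHomotopy_cast_ι hT R₁ R₂ h (by omega)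
      (by omega), R₁.ηβ, R₂.ηβ]
    simp

theorem map_α_comp_tensorHomotopy (n : ℕ) :
    (hT.map ι' R₁.α.f R₂.α.f (n + 1)).comp (tensorHomotopy hT R₁ R₂ n) = 0 :=
  hT.addHom_ext fun p q h x y => by
    rw [AddMonoidHom.comp_apply, tensorHomotopy_cast_ι hT R₁ R₂ h (by omega) (by omega), map_add,
      map_zsmul, hT.map_cast_ι, hT.map_cast_ι, R₁.αη, R₂.αη]
    simp

theorem map_α_comp_map_β (hT' : IsTensorCx C₁' C₂' T' ι') (n : ℕ) :
    (hT.map ι' R₁.α.f R₂.α.f n).comp (hT'.map ι R₁.β.f R₂.β.f n) = AddMonoidHom.id _ :=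
  hT'.addHom_ext fun p q h x y => by
    rw [AddMonoidHom.comp_apply, hT'.map_cast_ι, hT.map_cast_ι, R₁.αβ, R₂.αβ,
      AddMonoidHom.id_apply]

theorem tensorHomotopy_comp_tensorHomotopy (n : ℕ) :
    (tensorHomotopy hT R₁ R₂ (n + 1)).comp (tensorHomotopy hT R₁ R₂ n) = 0 :=
  hT.addHom_ext fun p q h x y => by
    rw [AddMonoidHom.comp_apply, tensorHomotopy_cast_ι hT R₁ R₂ h (by omega) (by omega), map_add,
      map_zsmul, tensorHomotopy_cast_ι hT R₁ R₂ _ (by omega) (by omega),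
      tensorHomotopy_cast_ι hT R₁ R₂ _ (by omega) (by omega), R₁.ηη, R₂.ηη, R₂.ηβ, R₂.αη]
    simp

theorem d_comp_tensorHomotopy_zero (hT' : IsTensorCx C₁' C₂' T' ι') :
    (T.d 0).comp (tensorHomotopy hT R₁ R₂ 0) =
      AddMonoidHom.id _ - (hT'.map ι R₁.β.f R₂.β.f 0).comp (hT.map ι' R₁.α.f R₂.α.f 0) :=
  hT.addHom_ext fun p q h x y => by
    obtain ⟨rfl, rfl⟩ : p = 0 ∧ q = 0 := by omega
    simp only [AddMonoidHom.comp_apply, AddMonoidHom.sub_apply, AddMonoidHom.id_apply,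
      hT.map_cast_ι, hT'.map_cast_ι]
    exact tensorHomotopy_hmt_cast_ι_zero_zero hT R₁ R₂ h x y

theorem d_comp_tensorHomotopy_add_tensorHomotopy_comp_d (hT' : IsTensorCx C₁' C₂' T' ι')
    (n : ℕ) :
    (T.d (n + 1)).comp (tensorHomotopy hT R₁ R₂ (n + 1)) +
        (tensorHomotopy hT R₁ R₂ n).comp (T.d n) =
      AddMonoidHom.id _ -
        (hT'.map ι R₁.β.f R₂.β.f (n + 1)).comp (hT.map ι' R₁.α.f R₂.α.f (n + 1)) :=
  hT.addHom_ext fun p q h x y => by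
    simp only [AddMonoidHom.add_apply, AddMonoidHom.comp_apply, AddMonoidHom.sub_apply,
      AddMonoidHom.id_apply, hT.map_cast_ι, hT'.map_cast_ι]
    match p, q, h, x, y with
    | 0, 0, h, _, _ => omega
    | 0, _ + 1, h, x, y => exact tensorHomotopy_hmt_cast_ι_zero_succ hT R₁ R₂ h x y
    | _ + 1, 0, h, x, y => exact tensorHomotopy_hmt_cast_ι_succ_zero hT R₁ R₂ h x y
    | _ + 1, _ + 1, h, x, y => exact tensorHomotopy_hmt_cast_ι_succ_succ hT R₁ R₂ h x y

end Identities

noncomputable def tensor (hT : IsTensorCx C₁ C₂ T ι) (hT' : IsTensorCx C₁' C₂' T' ι')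
    (R₁ : Reduction C₁ C₁') (R₂ : Reduction C₂ C₂') : Reduction T T' where
  α := ChMap.tensor hT hT' R₁.α R₂.α
  β := ChMap.tensor hT' hT R₁.β R₂.β
  η := tensorHomotopy hT R₁ R₂
  ηβ n := DFunLike.congr_fun (tensorHomotopy_comp_map_β hT R₁ R₂ hT' n)
  αη n := DFunLike.congr_fun (map_α_comp_tensorHomotopy hT R₁ R₂ n)
  αβ n := DFunLike.congr_fun (map_α_comp_map_β hT R₁ R₂ hT' n)
  ηη n := DFunLike.congr_fun (tensorHomotopy_comp_tensorHomotopy hT R₁ R₂ n)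
  hmt0 := DFunLike.congr_fun (d_comp_tensorHomotopy_zero hT R₁ R₂ hT')
  hmt n := DFunLike.congr_fun (d_comp_tensorHomotopy_add_tensorHomotopy_comp_d hT R₁ R₂ hT' n)

end Reduction

/-- the tensor product of two reductions is a reduction
`C₁ ⊗ C₂ ⇒ C₁' ⊗ C₂'`, with `α = α₁ ⊗ α₂`, `β = β₁ ⊗ β₂` and
`η = η₁ ⊗ β₂α₂ + id ⊗ η₂` (with Koszul signs). -/
theorem reduction_tensor (C₁ C₁' C₂ C₂' T T' : ChCx)
    (R₁ : Reduction C₁ C₁') (R₂ : Reduction C₂ C₂')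
    (ι : ∀ p q, TensorProduct ℤ (C₁.X p) (C₂.X q) →+ T.X (p + q))
    (ι' : ∀ p q, TensorProduct ℤ (C₁'.X p) (C₂'.X q) →+ T'.X (p + q))
    (hT : IsTensorCx C₁ C₂ T ι) (hT' : IsTensorCx C₁' C₂' T' ι') :
    ∃ R : Reduction T T',
      (∀ p q (x : C₁.X p) (y : C₂.X q),
        R.α.f (p + q) (ι p q (x ⊗ₜ[ℤ] y))
          = ι' p q ((R₁.α.f p x) ⊗ₜ[ℤ] (R₂.α.f q y))) ∧
      (∀ p q (x : C₁'.X p) (y : C₂'.X q),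
        R.β.f (p + q) (ι' p q (x ⊗ₜ[ℤ] y))
          = ι p q ((R₁.β.f p x) ⊗ₜ[ℤ] (R₂.β.f q y))) ∧
      (∀ p q (x : C₁.X p) (y : C₂.X q),
        R.η (p + q) (ι p q (x ⊗ₜ[ℤ] y))
          = T.cast (by omega)
              (ι (p + 1) q ((R₁.η p x) ⊗ₜ[ℤ] (R₂.β.f q (R₂.α.f q y))))
            + ((-1 : ℤ) ^ p) •
                T.cast (by omega) (ι p (q + 1) (x ⊗ₜ[ℤ] (R₂.η q y)))) :=
  ⟨Reduction.tensor hT hT' R₁ R₂,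
    fun _ _ x y => hT.map_cast_ι ι' R₁.α.f R₂.α.f rfl x y,
    fun _ _ x y => hT'.map_cast_ι ι R₁.β.f R₂.β.f rfl x y,
    fun _ _ x y => Reduction.tensorHomotopy_cast_ι hT R₁ R₂ rfl _ _ x y⟩
end
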